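/- For every real x > 0, e^{2x}(2x² − 12x + 12) + e^x(x⁴ + 8x² − 24) + 2x² + 12x + 12 > 0. -/

import Mathlib

open Real

lemma pos_of_deriv_pos (u v : ℝ → ℝ) (h0 : u 0 = 0)
    (hd : ∀ y : ℝ, HasDerivAt u (v y) y)
    (hv : ∀ y : ℝ, 0 < y → 0 < v y) :
    ∀ y : ℝ, 0 < y → 0 < u y := by
  have mono : StrictMonoOn u (Set.Ici 0) := by
    apply strictMonoOn_of_deriv_pos (convex_Ici 0)
    · exact fun y _ => (hd y).continuousAt.continuousWithinAt
    · intro y hy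
      rw [interior_Ici] at hy
      rw [(hd y).deriv]
      exact hv y hy
  intro y hy
  have := mono (Set.self_mem_Ici) (Set.mem_Ici.mpr hy.le) hy
  rwa [h0] at this

lemma u4_pos : ∀ y : ℝ, 0 < y → 0 < y * Real.sinh y := by
  intro y hy
  exact mul_pos hy (Real.sinh_pos_iff.mpr hy)

lemma u3_pos : ∀ y : ℝ, 0 < y → 0 < y * Real.cosh y - Real.sinh y := by
  apply pos_of_deriv_pos _ (fun y => y * Real.sinh y)
  · simp
  · intro y
    have h := ((hasDerivAt_id y).mul (Real.hasDerivAt_cosh y)).sub (Real.hasDerivAt_sinh y)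
    refine h.congr_deriv ?_
    simp only [id_eq]
    ring
  · exact u4_pos

lemma u2_pos : ∀ y : ℝ, 0 < y → 0 < y * Real.sinh y - 2 * Real.cosh y + 2 := by
  apply pos_of_deriv_pos _ (fun y => y * Real.cosh y - Real.sinh y)
  · simp
  · intro y
    have h := (((hasDerivAt_id y).mul (Real.hasDerivAt_sinh y)).sub
      ((Real.hasDerivAt_cosh y).const_mul 2)).add_const 2
    refine h.congr_deriv ?_
    simp only [id_eq]
    ring
  · exact u3_pos

lemma u1_pos : ∀ y : ℝ, 0 < y → 0 < y * Real.cosh y - 3 * Real.sinh y + 2 * y := by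
  apply pos_of_deriv_pos _ (fun y => y * Real.sinh y - 2 * Real.cosh y + 2)
  · simp
  · intro y
    have h := (((hasDerivAt_id y).mul (Real.hasDerivAt_cosh y)).sub
      ((Real.hasDerivAt_sinh y).const_mul 3)).add ((hasDerivAt_id y).const_mul 2)
    refine h.congr_deriv ?_
    simp only [id_eq]
    ring
  · exact u2_pos

lemma u0_pos : ∀ y : ℝ, 0 < y → 0 < y * Real.sinh y - 4 * Real.cosh y + y ^ 2 + 4 := by
  apply pos_of_deriv_pos _ (fun y => y * Real.cosh y - 3 * Real.sinh y + 2 * y)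
  · simp
  · intro y
    have h := ((((hasDerivAt_id y).mul (Real.hasDerivAt_sinh y)).sub
      ((Real.hasDerivAt_cosh y).const_mul 4)).add
      ((hasDerivAt_pow 2 y))).add_const 4
    refine h.congr_deriv ?_
    simp only [id_eq]
    ring
  · exact u1_pos

lemma g_pos : ∀ y : ℝ, 0 < y →
    0 < (4 * y ^ 2 + 24) * Real.cosh y - 24 * y * Real.sinh y + y ^ 4 + 8 * y ^ 2 - 24 := by
  have key : ∀ y : ℝ, 0 < y →
      0 < (4 * y ^ 2 + 24) * Real.cosh y - 24 * y * Real.sinh y + y ^ 4 + 8 * y ^ 2 - 24 + 0 := by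
    apply pos_of_deriv_pos _
      (fun y => 4 * y * (y * Real.sinh y - 4 * Real.cosh y + y ^ 2 + 4))
    · simp
    · intro y
      have h1 : HasDerivAt (fun y : ℝ => 4 * y ^ 2 + 24)
          (8 * y) y := by
        have := ((hasDerivAt_pow 2 y).const_mul 4).add_const 24
        refine this.congr_deriv ?_
        push_cast
        ring
      have h2 : HasDerivAt (fun y : ℝ => 24 * y) 24 y := by
        simpa using (hasDerivAt_id y).const_mul 24
      have h := ((((h1.mul (Real.hasDerivAt_cosh y)).sub
        (h2.mul (Real.hasDerivAt_sinh y))).add (hasDerivAt_pow 4 y)).add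
        ((hasDerivAt_pow 2 y).const_mul 8)).sub_const 24
      refine (h.add_const 0).congr_deriv ?_
      push_cast
      ring
    · intro y hy
      exact mul_pos (by linarith) (u0_pos y hy)
  intro y hy
  simpa using key y hy


/-- For every real `x > 0`,
`e^{2x}(2x² - 12x + 12) + e^x(x⁴ + 8x² - 24) + 2x² + 12x + 12 > 0`. -/
theorem exp_ineq_13 (x : ℝ) (hx : 0 < x) :
    0 < Real.exp (2 * x) * (2 * x ^ 2 - 12 * x + 12) +
        Real.exp x * (x ^ 4 + 8 * x ^ 2 - 24) + 2 * x ^ 2 + 12 * x + 12 := by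
  have hg := g_pos x hx
  have hfac : Real.exp (2 * x) * (2 * x ^ 2 - 12 * x + 12) +
        Real.exp x * (x ^ 4 + 8 * x ^ 2 - 24) + 2 * x ^ 2 + 12 * x + 12 =
      Real.exp x * ((4 * x ^ 2 + 24) * Real.cosh x - 24 * x * Real.sinh x
        + x ^ 4 + 8 * x ^ 2 - 24) := by
    rw [Real.cosh_eq, Real.sinh_eq, Real.exp_neg, two_mul, Real.exp_add]
    have h := Real.exp_pos x
    field_simp
    ring
  rw [hfac]
  exact mul_pos (Real.exp_pos x) hg
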